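/- Let (X, d_X) be a finite semi-metric space, 0 ≤ p < ∞ and 1 ≤ C < ∞. If X has strict p-negative type with distortion C, then there exists ζ > 0 such that X has strict q-negative type with distortion K for all q ∈ [p, p+ζ] and K ∈ [max(C−ζ, 1), C]. -/

import Mathlib

open Matrix

def IsSemiMetric {X : Type*} (d : X → X → ℝ) : Prop :=
  (∀ x y, d x y = d y x) ∧ (∀ x y, 0 ≤ d x y) ∧ (∀ x y, d x y = 0 ↔ x = y)

def MemO {n : ℕ} (Q : Matrix (Fin n) (Fin n) ℝ) : Prop :=
  Q.PosSemidef ∧ Q *ᵥ (fun _ => (1 : ℝ)) = 0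

noncomputable def distortedSum {X : Type*} (d : X → X → ℝ) (p : ℝ) {n : ℕ}
    (x : Fin n → X) (Q : Matrix (Fin n) (Fin n) ℝ) (C : ℝ) : ℝ :=
  (∑ i, ∑ j, if 0 < Q i j then d (x i) (x j) ^ p * Q i j else 0) +
    C ^ 2 * ∑ i, ∑ j, if Q i j < 0 then d (x i) (x j) ^ p * Q i j else 0

def NegTypeWith {X : Type*} (d : X → X → ℝ) (p C : ℝ) : Prop :=
  ∀ (n : ℕ), 2 ≤ n → ∀ x : Fin n → X, Function.Injective x →
    ∀ Q : Matrix (Fin n) (Fin n) ℝ, MemO Q → distortedSum d p x Q C ≤ 0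

def StrictNegTypeWith {X : Type*} (d : X → X → ℝ) (p C : ℝ) : Prop :=
  ∀ (n : ℕ), 2 ≤ n → ∀ x : Fin n → X, Function.Injective x →
    ∀ Q : Matrix (Fin n) (Fin n) ℝ, MemO Q → Q ≠ 0 → distortedSum d p x Q C < 0

def NegType {X : Type*} (d : X → X → ℝ) (p : ℝ) : Prop :=
  ∀ (n : ℕ), 2 ≤ n → ∀ x : Fin n → X, Function.Injective x →
    ∀ ξ : Fin n → ℝ, ∑ i, ξ i = 0 →
      ∑ i, ∑ j, d (x i) (x j) ^ p * (ξ i * ξ j) ≤ 0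

def StrictNegType {X : Type*} (d : X → X → ℝ) (p : ℝ) : Prop :=
  ∀ (n : ℕ), 2 ≤ n → ∀ x : Fin n → X, Function.Injective x →
    ∀ ξ : Fin n → ℝ, ∑ i, ξ i = 0 → ξ ≠ 0 →
      ∑ i, ∑ j, d (x i) (x j) ^ p * (ξ i * ξ j) < 0

noncomputable def c2 {X : Type*} (d : X → X → ℝ) : ℝ :=
  sInf {C : ℝ | 1 ≤ C ∧ ∃ f : X → lp (fun _ : ℕ => ℝ) 2, ∃ s : ℝ, 0 < s ∧
    ∀ x y, s * d x y ≤ ‖f x - f y‖ ∧ ‖f x - f y‖ ≤ s * C * d x y}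

noncomputable def posSum {n : ℕ} (Q : Matrix (Fin n) (Fin n) ℝ) : ℝ :=
  ∑ i, ∑ j, if 0 < Q i j then Q i j else 0

noncomputable def Delta {n : ℕ} (d : Fin n → Fin n → ℝ) (p C : ℝ) : ℝ :=
  sInf {t : ℝ | ∃ Q : Matrix (Fin n) (Fin n) ℝ, MemO Q ∧ posSum Q = 1 ∧
    t = -(distortedSum d p id Q C)}

lemma ite_pos_eq_max (c t : ℝ) (hc : 0 ≤ c) :
    (if 0 < t then c * t else 0) = c * max t 0 := by
  rcases lt_or_ge 0 t with h | h
  · simp [h, max_eq_left h.le]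
  · simp [not_lt.mpr h, max_eq_right h]

lemma ite_neg_eq_min (c t : ℝ) (hc : 0 ≤ c) :
    (if t < 0 then c * t else 0) = c * min t 0 := by
  rcases lt_or_ge t 0 with h | h
  · simp [h, min_eq_left h.le]
  · simp [not_lt.mpr h, min_eq_right h]

lemma distortedSum_eq {X : Type*} (d : X → X → ℝ) (hd : ∀ a b, 0 ≤ d a b) (p : ℝ) {n : ℕ}
    (x : Fin n → X) (Q : Matrix (Fin n) (Fin n) ℝ) (C : ℝ) :
    distortedSum d p x Q C =
      (∑ i, ∑ j, d (x i) (x j) ^ p * max (Q i j) 0) +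
        C ^ 2 * ∑ i, ∑ j, d (x i) (x j) ^ p * min (Q i j) 0 := by
  unfold distortedSum
  congr 1
  · exact Finset.sum_congr rfl fun i _ => Finset.sum_congr rfl fun j _ =>
      ite_pos_eq_max _ _ (Real.rpow_nonneg (hd _ _) p)
  · congr 1
    exact Finset.sum_congr rfl fun i _ => Finset.sum_congr rfl fun j _ =>
      ite_neg_eq_min _ _ (Real.rpow_nonneg (hd _ _) p)

lemma posSum_eq {n : ℕ} (Q : Matrix (Fin n) (Fin n) ℝ) :
    posSum Q = ∑ i, ∑ j, max (Q i j) 0 := by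
  unfold posSum
  exact Finset.sum_congr rfl fun i _ => Finset.sum_congr rfl fun j _ => by
    simpa using ite_pos_eq_max 1 (Q i j) zero_le_one

lemma MemO.symm_entry {n : ℕ} {Q : Matrix (Fin n) (Fin n) ℝ} (h : MemO Q) (i j : Fin n) :
    Q j i = Q i j := by
  have := h.1.1
  calc Q j i = Qᴴ i j := by simp [conjTranspose_apply]
  _ = Q i j := by rw [this]

lemma MemO.diag_nonneg {n : ℕ} {Q : Matrix (Fin n) (Fin n) ℝ} (h : MemO Q) (i : Fin n) :
    0 ≤ Q i i := by
  have := h.1.dotProduct_mulVec_nonneg (Pi.single i 1)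
  simpa [dotProduct, mulVec, Pi.single_apply, Finset.sum_ite_eq] using this

lemma MemO.total_zero {n : ℕ} {Q : Matrix (Fin n) (Fin n) ℝ} (h : MemO Q) :
    ∑ i, ∑ j, Q i j = 0 := by
  have h2 := h.2
  have : ∀ i, ∑ j, Q i j = 0 := by
    intro i
    have := congr_fun h2 i
    simpa [mulVec, dotProduct] using this
  simp [this]

lemma MemO.negSum {n : ℕ} {Q : Matrix (Fin n) (Fin n) ℝ} (h : MemO Q) :
    ∑ i, ∑ j, min (Q i j) 0 = -posSum Q := by
  have key : ∑ i, ∑ j, (max (Q i j) 0 + min (Q i j) 0) = 0 := by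
    simp only [max_add_min]; simpa using h.total_zero
  rw [posSum_eq]
  have := key
  rw [Finset.sum_congr rfl fun i _ => Finset.sum_add_distrib] at this
  rw [Finset.sum_add_distrib] at this
  linarith

lemma MemO.exists_diag_pos {n : ℕ} {Q : Matrix (Fin n) (Fin n) ℝ} (h : MemO Q) (hQ : Q ≠ 0) :
    ∃ i, 0 < Q i i := by
  by_contra hcon
  push_neg at hcon
  apply hQ
  have hdiag : ∀ i, Q i i = 0 := fun i => le_antisymm (hcon i) (h.diag_nonneg i)
  ext i j
  have hcol : Q *ᵥ (Pi.single j 1) = 0 := by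
    rw [← (h.1.dotProduct_mulVec_zero_iff (Pi.single j 1))]
    simp [dotProduct, mulVec, Pi.single_apply, Finset.sum_ite_eq, hdiag]
  have := congr_fun hcol i
  simpa [mulVec, dotProduct, Pi.single_apply] using this

lemma max_le_posSum {n : ℕ} (Q : Matrix (Fin n) (Fin n) ℝ) (a b : Fin n) :
    max (Q a b) 0 ≤ posSum Q := by
  rw [posSum_eq]
  have h1 : max (Q a b) 0 ≤ ∑ j, max (Q a j) 0 :=
    Finset.single_le_sum (f := fun j => max (Q a j) 0) (fun j _ => le_max_right _ _)
      (Finset.mem_univ b)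
  exact h1.trans (Finset.single_le_sum (f := fun i => ∑ j, max (Q i j) 0)
    (fun i _ => Finset.sum_nonneg fun j _ => le_max_right _ _) (Finset.mem_univ a))

lemma neg_min_le_posSum {n : ℕ} {Q : Matrix (Fin n) (Fin n) ℝ} (h : MemO Q) (a b : Fin n) :
    -min (Q a b) 0 ≤ posSum Q := by
  have hs : ∑ i, ∑ j, -min (Q i j) 0 = posSum Q := by
    simp only [Finset.sum_neg_distrib, h.negSum, neg_neg]
  rw [← hs]
  have h1 : -min (Q a b) 0 ≤ ∑ j, -min (Q a j) 0 :=
    Finset.single_le_sum (f := fun j => -min (Q a j) 0)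
      (fun j _ => neg_nonneg.mpr (min_le_right _ _)) (Finset.mem_univ b)
  exact h1.trans (Finset.single_le_sum (f := fun i => ∑ j, -min (Q i j) 0)
    (fun i _ => Finset.sum_nonneg fun j _ => neg_nonneg.mpr (min_le_right _ _)) (Finset.mem_univ a))

lemma posSum_pos {n : ℕ} {Q : Matrix (Fin n) (Fin n) ℝ} (h : MemO Q) (hQ : Q ≠ 0) :
    0 < posSum Q := by
  obtain ⟨i, hi⟩ := h.exists_diag_pos hQ
  calc (0:ℝ) < Q i i := hi
  _ ≤ max (Q i i) 0 := le_max_left _ _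
  _ ≤ posSum Q := max_le_posSum Q i i

lemma max_smul_zero (s t : ℝ) (hs : 0 ≤ s) : max (s * t) 0 = s * max t 0 := by
  rcases le_or_gt t 0 with h | h
  · rw [max_eq_right (mul_nonpos_of_nonneg_of_nonpos hs h), max_eq_right h, mul_zero]
  · rw [max_eq_left (mul_nonneg hs h.le), max_eq_left h.le]

lemma min_smul_zero (s t : ℝ) (hs : 0 ≤ s) : min (s * t) 0 = s * min t 0 := by
  rcases le_or_gt t 0 with h | h
  · rw [min_eq_left (mul_nonpos_of_nonneg_of_nonpos hs h), min_eq_left h]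
  · rw [min_eq_right (mul_nonneg hs h.le), min_eq_right h.le, mul_zero]

lemma MemO.smul {n : ℕ} {Q : Matrix (Fin n) (Fin n) ℝ} (h : MemO Q) {s : ℝ} (hs : 0 ≤ s) :
    MemO (s • Q) := by
  refine ⟨PosSemidef.of_dotProduct_mulVec_nonneg ?_ ?_, ?_⟩
  · ext i j
    simp only [conjTranspose_apply, Matrix.smul_apply, star_trivial, smul_eq_mul]
    rw [h.symm_entry]
  · intro v
    have h1 := h.1.dotProduct_mulVec_nonneg v
    have : star v ⬝ᵥ (s • Q) *ᵥ v = s * (star v ⬝ᵥ Q *ᵥ v) := by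
      rw [smul_mulVec, dotProduct_smul]; simp
    rw [this]
    exact mul_nonneg hs h1
  · rw [smul_mulVec, h.2]; simp

lemma posSum_smul {n : ℕ} (Q : Matrix (Fin n) (Fin n) ℝ) {s : ℝ} (hs : 0 < s) :
    posSum (s • Q) = s * posSum Q := by
  rw [posSum_eq, posSum_eq, Finset.mul_sum]
  refine Finset.sum_congr rfl fun i _ => ?_
  rw [Finset.mul_sum]
  refine Finset.sum_congr rfl fun j _ => ?_
  simp only [Matrix.smul_apply, smul_eq_mul]
  rw [max_smul_zero _ _ hs.le]

lemma distortedSum_smul {X : Type*} (d : X → X → ℝ) (p : ℝ) {n : ℕ}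
    (x : Fin n → X) (Q : Matrix (Fin n) (Fin n) ℝ) (C : ℝ) {s : ℝ} (hs : 0 < s) :
    distortedSum d p x (s • Q) C = s * distortedSum d p x Q C := by
  unfold distortedSum
  have h1 : ∀ f t : ℝ, (if 0 < s * t then f * (s * t) else 0) =
      s * (if 0 < t then f * t else 0) := by
    intro f t
    rcases lt_or_ge 0 t with h | h
    · rw [if_pos h, if_pos (mul_pos hs h)]; ring
    · rw [if_neg (not_lt.mpr h),
        if_neg (not_lt.mpr (mul_nonpos_of_nonneg_of_nonpos hs.le h)), mul_zero]
  have h2 : ∀ f t : ℝ, (if s * t < 0 then f * (s * t) else 0) =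
      s * (if t < 0 then f * t else 0) := by
    intro f t
    rcases lt_or_ge t 0 with h | h
    · rw [if_pos h, if_pos (mul_neg_of_pos_of_neg hs h)]; ring
    · rw [if_neg (not_lt.mpr h),
        if_neg (not_lt.mpr (mul_nonneg hs.le h)), mul_zero]
  simp only [Matrix.smul_apply, smul_eq_mul, h1, h2, ← Finset.mul_sum]
  ring

section Pad

variable {n N : ℕ} (ι : Fin n → Fin N)

/-- Zero-padding of a matrix along an injection. -/
noncomputable def pad (Q : Matrix (Fin n) (Fin n) ℝ) : Matrix (Fin N) (Fin N) ℝ :=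
  fun a b => ∑ i, ∑ j, if a = ι i ∧ b = ι j then Q i j else 0

variable {ι}

lemma pad_apply (hι : Function.Injective ι) (Q : Matrix (Fin n) (Fin n) ℝ) (i j : Fin n) :
    pad ι Q (ι i) (ι j) = Q i j := by
  unfold pad
  rw [Finset.sum_eq_single i]
  · rw [Finset.sum_eq_single j]
    · simp
    · intro b _ hb
      rw [if_neg]
      rintro ⟨-, h2⟩
      exact hb (hι h2).symm
    · intro hj; exact absurd (Finset.mem_univ j) hj
  · intro a _ ha
    refine Finset.sum_eq_zero fun c _ => ?_
    rw [if_neg]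
    rintro ⟨h1, -⟩
    exact ha (hι h1).symm
  · intro hi; exact absurd (Finset.mem_univ i) hi

lemma pad_eq_zero_left {a : Fin N} (ha : ∀ i, a ≠ ι i) (Q : Matrix (Fin n) (Fin n) ℝ)
    (b : Fin N) : pad ι Q a b = 0 := by
  unfold pad
  exact Finset.sum_eq_zero fun i _ => Finset.sum_eq_zero fun j _ => by simp [ha i]

lemma pad_eq_zero_right {b : Fin N} (hb : ∀ j, b ≠ ι j) (Q : Matrix (Fin n) (Fin n) ℝ)
    (a : Fin N) : pad ι Q a b = 0 := by
  unfold pad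
  exact Finset.sum_eq_zero fun i _ => Finset.sum_eq_zero fun j _ => by simp [hb j]

lemma sum_pad_row (hι : Function.Injective ι) (Q : Matrix (Fin n) (Fin n) ℝ) (i : Fin n)
    (g : Fin N → ℝ → ℝ) (hg : ∀ b, g b 0 = 0) :
    ∑ b, g b (pad ι Q (ι i) b) = ∑ j, g (ι j) (Q i j) := by
  have h1 : ∑ b ∈ Finset.univ.image ι, g b (pad ι Q (ι i) b) =
      ∑ b, g b (pad ι Q (ι i) b) := by
    refine Finset.sum_subset (Finset.subset_univ _) fun b _ hb => ?_
    have : ∀ j, b ≠ ι j := by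
      intro j hbj
      exact hb (Finset.mem_image.mpr ⟨j, Finset.mem_univ j, hbj.symm⟩)
    rw [pad_eq_zero_right this, hg]
  rw [← h1, Finset.sum_image (fun a _ b _ hab => hι hab)]
  exact Finset.sum_congr rfl fun j _ => by rw [pad_apply hι]

lemma sum_pad (hι : Function.Injective ι) (Q : Matrix (Fin n) (Fin n) ℝ)
    (g : Fin N → Fin N → ℝ → ℝ) (hg : ∀ a b, g a b 0 = 0) :
    ∑ a, ∑ b, g a b (pad ι Q a b) = ∑ i, ∑ j, g (ι i) (ι j) (Q i j) := by
  have h1 : ∑ a ∈ Finset.univ.image ι, ∑ b, g a b (pad ι Q a b) =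
      ∑ a, ∑ b, g a b (pad ι Q a b) := by
    refine Finset.sum_subset (Finset.subset_univ _) fun a _ ha => ?_
    have : ∀ i, a ≠ ι i := by
      intro i hai
      exact ha (Finset.mem_image.mpr ⟨i, Finset.mem_univ i, hai.symm⟩)
    exact Finset.sum_eq_zero fun b _ => by rw [pad_eq_zero_left this, hg]
  rw [← h1, Finset.sum_image (fun a _ b _ hab => hι hab)]
  exact Finset.sum_congr rfl fun i _ => sum_pad_row hι Q i (g (ι i)) (hg (ι i))

lemma memO_pad (hι : Function.Injective ι) {Q : Matrix (Fin n) (Fin n) ℝ} (h : MemO Q) :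
    MemO (pad ι Q) := by
  refine ⟨PosSemidef.of_dotProduct_mulVec_nonneg ?_ ?_, ?_⟩
  · ext a b
    simp only [conjTranspose_apply, star_trivial]
    unfold pad
    rw [Finset.sum_comm]
    refine Finset.sum_congr rfl fun i _ => Finset.sum_congr rfl fun j _ => ?_
    rw [h.symm_entry]
    simp [and_comm]
  · intro v
    simp only [star_trivial]
    have hv : v ⬝ᵥ (pad ι Q) *ᵥ v = ∑ a, ∑ b, v a * pad ι Q a b * v b := by
      simp only [dotProduct, mulVec, Finset.mul_sum]
      exact Finset.sum_congr rfl fun a _ => Finset.sum_congr rfl fun b _ => by ring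
    rw [hv, sum_pad hι Q (fun a b t => v a * t * v b) (fun a b => by ring)]
    have h2 := h.1.dotProduct_mulVec_nonneg (fun i => v (ι i))
    simp only [star_trivial, dotProduct, mulVec] at h2
    calc (0:ℝ) ≤ ∑ i, v (ι i) * ∑ j, Q i j * v (ι j) := h2
    _ = ∑ i, ∑ j, v (ι i) * Q i j * v (ι j) := by
      refine Finset.sum_congr rfl fun i _ => ?_
      rw [Finset.mul_sum]
      exact Finset.sum_congr rfl fun j _ => by ring
  · funext a
    by_cases ha : ∃ i, a = ι i
    · obtain ⟨i, rfl⟩ := ha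
      have : (pad ι Q *ᵥ fun _ => (1:ℝ)) (ι i) = ∑ b, pad ι Q (ι i) b := by
        simp [mulVec, dotProduct]
      rw [this, sum_pad_row hι Q i (fun _ t => t) (fun _ => rfl)]
      have := congr_fun h.2 i
      simpa [mulVec, dotProduct] using this
    · push_neg at ha
      have : (pad ι Q *ᵥ fun _ => (1:ℝ)) a = ∑ b, pad ι Q a b := by
        simp [mulVec, dotProduct]
      rw [this]
      exact Finset.sum_eq_zero fun b _ => pad_eq_zero_left ha Q b

lemma pad_ne_zero (hι : Function.Injective ι) {Q : Matrix (Fin n) (Fin n) ℝ} (hQ : Q ≠ 0) :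
    pad ι Q ≠ 0 := by
  intro hc
  apply hQ
  ext i j
  have := congr_fun (congr_fun hc (ι i)) (ι j)
  rw [pad_apply hι] at this
  simpa using this

lemma posSum_pad (hι : Function.Injective ι) (Q : Matrix (Fin n) (Fin n) ℝ) :
    posSum (pad ι Q) = posSum Q := by
  unfold posSum
  exact sum_pad hι Q (fun a b t => if 0 < t then t else 0) (fun a b => by simp)

lemma distortedSum_pad {X : Type*} (d : X → X → ℝ) (q K : ℝ) (hι : Function.Injective ι)
    (y : Fin N → X) (Q : Matrix (Fin n) (Fin n) ℝ) :
    distortedSum d q (y ∘ ι) Q K = distortedSum d q y (pad ι Q) K := by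
  unfold distortedSum
  congr 1
  · exact (sum_pad hι Q (fun a b t => if 0 < t then d (y a) (y b) ^ q * t else 0)
      (fun a b => by simp)).symm
  · congr 1
    exact (sum_pad hι Q (fun a b t => if t < 0 then d (y a) (y b) ^ q * t else 0)
      (fun a b => by simp)).symm

end Pad

lemma reduce {X : Type*} [Fintype X] (d : X → X → ℝ) (q K : ℝ)
    (hbig : ∀ Q : Matrix (Fin (Fintype.card X)) (Fin (Fintype.card X)) ℝ,
      MemO Q → Q ≠ 0 → distortedSum d q (⇑(Fintype.equivFin X).symm) Q K < 0) :
    StrictNegTypeWith d q K := by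
  intro n hn x hx Q hQ hQ0
  set e := Fintype.equivFin X
  set ι : Fin n → Fin (Fintype.card X) := fun i => e (x i) with hι_def
  have hι : Function.Injective ι := fun a b hab => hx (e.injective hab)
  have hxy : x = (⇑e.symm) ∘ ι := by
    funext i; simp [hι_def]
  rw [hxy, distortedSum_pad d q K hι]
  exact hbig (pad ι Q) (memO_pad hι hQ) (pad_ne_zero hι hQ0)

section Compact

variable {N : ℕ}

lemma continuous_distortedSum {X : Type*} (d : X → X → ℝ) (hd : ∀ a b, 0 ≤ d a b) (p C : ℝ)
    (y : Fin N → X) :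
    Continuous fun Q : Matrix (Fin N) (Fin N) ℝ => distortedSum d p y Q C := by
  have : (fun Q : Matrix (Fin N) (Fin N) ℝ => distortedSum d p y Q C) =
      fun Q => (∑ i, ∑ j, d (y i) (y j) ^ p * max (Q i j) 0) +
        C ^ 2 * ∑ i, ∑ j, d (y i) (y j) ^ p * min (Q i j) 0 := by
    funext Q; exact distortedSum_eq d hd p y Q C
  rw [this]
  refine Continuous.add ?_ (continuous_const.mul ?_)
  · refine continuous_finset_sum _ fun i _ => continuous_finset_sum _ fun j _ => ?_
    exact continuous_const.mul ((continuous_id.matrix_elem i j).max continuous_const)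
  · refine continuous_finset_sum _ fun i _ => continuous_finset_sum _ fun j _ => ?_
    exact continuous_const.mul ((continuous_id.matrix_elem i j).min continuous_const)

lemma continuous_posSum :
    Continuous fun Q : Matrix (Fin N) (Fin N) ℝ => posSum Q := by
  have : (fun Q : Matrix (Fin N) (Fin N) ℝ => posSum Q) =
      fun Q => ∑ i, ∑ j, max (Q i j) 0 := by
    funext Q; exact posSum_eq Q
  rw [this]
  refine continuous_finset_sum _ fun i _ => continuous_finset_sum _ fun j _ => ?_
  exact (continuous_id.matrix_elem i j).max continuous_const

lemma isClosed_S :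
    IsClosed {Q : Matrix (Fin N) (Fin N) ℝ | MemO Q ∧ posSum Q = 1} := by
  have h1 : {Q : Matrix (Fin N) (Fin N) ℝ | MemO Q ∧ posSum Q = 1} =
      (⋂ p : Fin N × Fin N, {Q | Q p.2 p.1 = Q p.1 p.2}) ∩
      (⋂ v : Fin N → ℝ, {Q | 0 ≤ v ⬝ᵥ Q *ᵥ v}) ∩
      {Q | Q *ᵥ (fun _ => (1:ℝ)) = 0} ∩ {Q | posSum Q = 1} := by
    ext Q
    simp only [Set.mem_setOf_eq, Set.mem_inter_iff, Set.mem_iInter]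
    constructor
    · rintro ⟨⟨hpsd, hmv⟩, hps⟩
      refine ⟨⟨⟨fun p => MemO.symm_entry ⟨hpsd, hmv⟩ p.1 p.2, fun v => ?_⟩, hmv⟩, hps⟩
      simpa using hpsd.dotProduct_mulVec_nonneg v
    · rintro ⟨⟨⟨hsym, hpos⟩, hmv⟩, hps⟩
      refine ⟨⟨PosSemidef.of_dotProduct_mulVec_nonneg ?_ fun v => by simpa using hpos v, hmv⟩, hps⟩
      ext i j
      simp only [conjTranspose_apply, star_trivial]
      exact hsym (i, j)
  rw [h1]
  refine IsClosed.inter (IsClosed.inter (IsClosed.inter ?_ ?_) ?_) ?_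
  · exact isClosed_iInter fun p => isClosed_eq
      (continuous_id.matrix_elem p.2 p.1) (continuous_id.matrix_elem p.1 p.2)
  · refine isClosed_iInter fun v => isClosed_le continuous_const ?_
    exact (continuous_const : Continuous fun _ : Matrix (Fin N) (Fin N) ℝ => v).dotProduct
      (continuous_id.matrix_mulVec continuous_const)
  · exact isClosed_eq (continuous_id.matrix_mulVec continuous_const) continuous_const
  · exact isClosed_eq continuous_posSum continuous_const

lemma isCompact_S :
    IsCompact {Q : Matrix (Fin N) (Fin N) ℝ | MemO Q ∧ posSum Q = 1} := by
  have hbox : IsCompact {Q : Matrix (Fin N) (Fin N) ℝ | ∀ a b, Q a b ∈ Set.Icc (-1:ℝ) 1} := by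
    have : {Q : Matrix (Fin N) (Fin N) ℝ | ∀ a b, Q a b ∈ Set.Icc (-1:ℝ) 1} =
        Set.univ.pi fun _ : Fin N => Set.univ.pi fun _ : Fin N => Set.Icc (-1:ℝ) 1 := by
      ext Q
      simp [Set.mem_univ_pi, forall_and]
      constructor <;> (rintro ⟨h1, h2⟩; exact ⟨fun a => h1 a, fun a => h2 a⟩)
    rw [this]
    exact isCompact_univ_pi fun _ => isCompact_univ_pi fun _ => isCompact_Icc
  refine IsCompact.of_isClosed_subset hbox isClosed_S ?_
  rintro Q ⟨hQ, hps⟩ a b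
  constructor
  · have := neg_min_le_posSum hQ a b
    rw [hps] at this
    have h2 : min (Q a b) 0 ≤ Q a b := min_le_left _ _
    linarith
  · have := max_le_posSum Q a b
    rw [hps] at this
    have h2 : Q a b ≤ max (Q a b) 0 := le_max_left _ _
    linarith

end Compact

lemma zero_rpow_le {p q : ℝ} (hp : 0 ≤ p) (hpq : p ≤ q) : (0:ℝ) ^ q ≤ (0:ℝ) ^ p := by
  rcases hp.eq_or_lt with h | h
  · rw [← h, Real.rpow_zero]
    rcases ((le_of_eq h).trans hpq).eq_or_lt with h2 | h2
    · rw [← h2, Real.rpow_zero]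
    · rw [Real.zero_rpow h2.ne']
      norm_num
  · rw [Real.zero_rpow h.ne', Real.zero_rpow (h.trans_le hpq).ne']

lemma estimate {X : Type*} (d : X → X → ℝ) (hd : IsSemiMetric d) {N : ℕ} (y : Fin N → X)
    (hy : Function.Injective y) (p q C K : ℝ) (hp : 0 ≤ p) (hpq : p ≤ q)
    (hK0 : 0 ≤ K) (hKC : K ≤ C)
    (Q : Matrix (Fin N) (Fin N) ℝ) (hQ : MemO Q) (hQ1 : posSum Q = 1) :
    distortedSum d q y Q K ≤ distortedSum d p y Q C +
      (∑ i, ∑ j, if i = j then 0 else |d (y i) (y j) ^ q - d (y i) (y j) ^ p|) * (1 + C ^ 2) +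
      (C ^ 2 - K ^ 2) * (∑ i, ∑ j, d (y i) (y j) ^ p) := by
  have hd0 : ∀ a b, 0 ≤ d a b := hd.2.1
  have hdzero : ∀ i : Fin N, d (y i) (y i) = 0 := fun i => (hd.2.2 _ _).mpr rfl
  have hmax0 : ∀ a b, 0 ≤ max (Q a b) 0 := fun a b => le_max_right _ _
  have hmax1 : ∀ a b, max (Q a b) 0 ≤ 1 := by
    intro a b; have := max_le_posSum Q a b; rwa [hQ1] at this
  have hmin1 : ∀ a b, -1 ≤ min (Q a b) 0 := by
    intro a b; have := neg_min_le_posSum hQ a b; rw [hQ1] at this; linarith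
  have hmin0 : ∀ a b, min (Q a b) 0 ≤ 0 := fun a b => min_le_right _ _
  have hdiag : ∀ i, min (Q i i) 0 = 0 := fun i => min_eq_right (hQ.diag_nonneg i)
  set G := ∑ i, ∑ j, if i = j then (0:ℝ) else |d (y i) (y j) ^ q - d (y i) (y j) ^ p| with hG_def
  set B := ∑ i, ∑ j, d (y i) (y j) ^ p with hB_def
  have hG : 0 ≤ G := Finset.sum_nonneg fun i _ => Finset.sum_nonneg fun j _ => by
    by_cases h : i = j <;> simp [h, abs_nonneg]
  have hK2C2 : K ^ 2 ≤ C ^ 2 := by nlinarith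
  rw [distortedSum_eq d hd0 q y Q K, distortedSum_eq d hd0 p y Q C]
  set Pq := ∑ i, ∑ j, d (y i) (y j) ^ q * max (Q i j) 0 with hPq_def
  set Pp := ∑ i, ∑ j, d (y i) (y j) ^ p * max (Q i j) 0 with hPp_def
  set Mq := ∑ i, ∑ j, d (y i) (y j) ^ q * min (Q i j) 0 with hMq_def
  set Mp := ∑ i, ∑ j, d (y i) (y j) ^ p * min (Q i j) 0 with hMp_def
  have hA : Pq ≤ Pp + G := by
    rw [hPq_def, hPp_def, hG_def, ← Finset.sum_add_distrib]
    refine Finset.sum_le_sum fun i _ => ?_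
    rw [← Finset.sum_add_distrib]
    refine Finset.sum_le_sum fun j _ => ?_
    by_cases h : i = j
    · subst h
      have : (if i = i then (0:ℝ) else |d (y i) (y i) ^ q - d (y i) (y i) ^ p|) = 0 :=
        if_pos rfl
      rw [this, add_zero, hdzero i]
      exact mul_le_mul_of_nonneg_right (zero_rpow_le hp hpq) (hmax0 i i)
    · rw [if_neg h]
      have h1 := le_abs_self (d (y i) (y j) ^ q - d (y i) (y j) ^ p)
      nlinarith [hmax0 i j, hmax1 i j, abs_nonneg (d (y i) (y j) ^ q - d (y i) (y j) ^ p)]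
  have hB2 : Mq ≤ Mp + G := by
    rw [hMq_def, hMp_def, hG_def, ← Finset.sum_add_distrib]
    refine Finset.sum_le_sum fun i _ => ?_
    rw [← Finset.sum_add_distrib]
    refine Finset.sum_le_sum fun j _ => ?_
    by_cases h : i = j
    · subst h
      simp [hdiag i]
    · rw [if_neg h]
      have h1 := le_abs_self (d (y i) (y j) ^ q - d (y i) (y j) ^ p)
      have h2 := neg_abs_le (d (y i) (y j) ^ q - d (y i) (y j) ^ p)
      nlinarith [hmin0 i j, hmin1 i j]
  have hMpB : -B ≤ Mp := by
    rw [hMp_def, hB_def]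
    have : -B = ∑ i, ∑ j, -(d (y i) (y j) ^ p) := by
      rw [hB_def]; simp [Finset.sum_neg_distrib]
    rw [this]
    refine Finset.sum_le_sum fun i _ => Finset.sum_le_sum fun j _ => ?_
    have := Real.rpow_nonneg (hd0 (y i) (y j)) p
    nlinarith [hmin1 i j]
  have hKM : K ^ 2 * Mq ≤ K ^ 2 * Mp + K ^ 2 * G := by
    nlinarith [mul_nonneg (sq_nonneg K) (by linarith : (0:ℝ) ≤ Mp + G - Mq)]
  have hKG : K ^ 2 * G ≤ C ^ 2 * G := mul_le_mul_of_nonneg_right hK2C2 hG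
  have hKMp : K ^ 2 * Mp ≤ C ^ 2 * Mp + (C ^ 2 - K ^ 2) * B := by
    nlinarith [mul_nonneg (by linarith : (0:ℝ) ≤ C ^ 2 - K ^ 2) (by linarith : (0:ℝ) ≤ Mp + B)]
  linarith

lemma continuous_G {X : Type*} (d : X → X → ℝ) (hd : IsSemiMetric d) {N : ℕ} (y : Fin N → X)
    (hy : Function.Injective y) (p : ℝ) :
    Continuous fun q : ℝ =>
      ∑ i, ∑ j, if i = j then (0:ℝ) else |d (y i) (y j) ^ q - d (y i) (y j) ^ p| := by
  refine continuous_finset_sum _ fun i _ => continuous_finset_sum _ fun j _ => ?_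
  by_cases h : i = j
  · simp only [if_pos h]
    exact continuous_const
  · simp only [if_neg h]
    have hdij : 0 < d (y i) (y j) := by
      rcases (hd.2.1 (y i) (y j)).eq_or_lt with h2 | h2
      · exact absurd (hy ((hd.2.2 (y i) (y j)).mp h2.symm)) h
      · exact h2
    have hrw : (fun q : ℝ => d (y i) (y j) ^ q) =
        fun q => Real.exp (Real.log (d (y i) (y j)) * q) :=
      funext fun q => Real.rpow_def_of_pos hdij q
    have hc : Continuous fun q : ℝ => d (y i) (y j) ^ q := by
      rw [hrw]
      exact Real.continuous_exp.comp (continuous_const.mul continuous_id)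
    exact (hc.sub continuous_const).abs

theorem statement12 {X : Type*} [Fintype X] (d : X → X → ℝ) (hd : IsSemiMetric d)
    (p C : ℝ) (hp : 0 ≤ p) (hC : 1 ≤ C) (h : StrictNegTypeWith d p C) :
    ∃ ζ : ℝ, 0 < ζ ∧ ∀ q ∈ Set.Icc p (p + ζ), ∀ K ∈ Set.Icc (max (C - ζ) 1) C,
      StrictNegTypeWith d q K := by
  have hd0 : ∀ a b, 0 ≤ d a b := hd.2.1
  by_cases hcard : 2 ≤ Fintype.card X
  swap
  · refine ⟨1, one_pos, fun q _ K _ => ?_⟩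
    intro n hn x hx Q hQ hQ0
    exfalso
    have := Fintype.card_le_of_injective x hx
    rw [Fintype.card_fin] at this
    omega
  · set N := Fintype.card X with hN
    set y : Fin N → X := ⇑(Fintype.equivFin X).symm with hy_def
    have hy : Function.Injective y := (Fintype.equivFin X).symm.injective
    set S := {Q : Matrix (Fin N) (Fin N) ℝ | MemO Q ∧ posSum Q = 1} with hS_def
    rcases Set.eq_empty_or_nonempty S with hSe | hSne
    · refine ⟨1, one_pos, fun q _ K _ => ?_⟩
      apply reduce
      intro Q hQ hQ0
      exfalso
      have hs := posSum_pos hQ hQ0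
      have hmem : (posSum Q)⁻¹ • Q ∈ S := by
        refine ⟨hQ.smul (inv_nonneg.mpr hs.le), ?_⟩
        rw [posSum_smul _ (inv_pos.mpr hs)]
        field_simp
      rw [hSe] at hmem
      exact hmem
    · obtain ⟨Q₀, hQ₀S, hmaxon⟩ := isCompact_S.exists_isMaxOn hSne
        ((continuous_distortedSum d hd0 p C y).continuousOn)
      have hQ₀0 : Q₀ ≠ 0 := by
        intro hc
        have h2 := hQ₀S.2
        rw [hc] at h2
        simp [posSum] at h2
      have hneg : distortedSum d p y Q₀ C < 0 := h N hcard y hy Q₀ hQ₀S.1 hQ₀0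
      set δ := -distortedSum d p y Q₀ C with hδ_def
      have hδpos : 0 < δ := by rw [hδ_def]; linarith
      set B := ∑ i, ∑ j, d (y i) (y j) ^ p with hB_def
      have hBnn : 0 ≤ B := Finset.sum_nonneg fun i _ => Finset.sum_nonneg fun j _ =>
        Real.rpow_nonneg (hd0 _ _) p
      set E := 1 + C ^ 2 + 2 * C * B with hE_def
      have hEpos : 0 < E := by nlinarith
      have hg := (continuous_G d hd y hy p).continuousAt (x := p)
      rw [Metric.continuousAt_iff] at hg
      obtain ⟨ζ₁, hζ₁pos, hζ₁⟩ := hg (δ / (2 * E)) (by positivity)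
      set ζ := min (ζ₁ / 2) (δ / (2 * E)) with hζ_def
      have hζpos : 0 < ζ := by
        rw [hζ_def]
        exact lt_min (by linarith) (by positivity)
      refine ⟨ζ, hζpos, ?_⟩
      rintro q ⟨hq1, hq2⟩ K ⟨hK1, hK2⟩
      have hK1' : (1:ℝ) ≤ K := le_trans (le_max_right _ _) hK1
      have hKζ : C - ζ ≤ K := le_trans (le_max_left _ _) hK1
      apply reduce
      intro Q hQ hQ0
      have hs := posSum_pos hQ hQ0
      set Q' := (posSum Q)⁻¹ • Q with hQ'_def
      have hQ'mem : MemO Q' := hQ.smul (inv_nonneg.mpr hs.le)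
      have hQ'1 : posSum Q' = 1 := by
        rw [hQ'_def, posSum_smul _ (inv_pos.mpr hs)]
        field_simp
      have hQ'S : Q' ∈ S := ⟨hQ'mem, hQ'1⟩
      have hGq : (∑ i, ∑ j, if i = j then (0:ℝ)
          else |d (y i) (y j) ^ q - d (y i) (y j) ^ p|) ≤ δ / (2 * E) := by
        have hdist : dist q p < ζ₁ := by
          rw [Real.dist_eq, abs_of_nonneg (by linarith)]
          have : q - p ≤ ζ := by linarith
          have h2 : ζ ≤ ζ₁ / 2 := min_le_left _ _
          linarith
        have h2 := hζ₁ hdist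
        have hgp : (∑ i, ∑ j, if i = j then (0:ℝ)
            else |d (y i) (y j) ^ p - d (y i) (y j) ^ p|) = 0 := by
          refine Finset.sum_eq_zero fun i _ => Finset.sum_eq_zero fun j _ => ?_
          by_cases hij : i = j <;> simp [hij]
        rw [Real.dist_eq, hgp, sub_zero] at h2
        exact (le_abs_self _).trans h2.le
      have hest := estimate d hd y hy p q C K hp hq1 (by linarith) hK2 Q' hQ'mem hQ'1
      have hmaxed : distortedSum d p y Q' C ≤ distortedSum d p y Q₀ C := hmaxon hQ'S
      have hCK : C ^ 2 - K ^ 2 ≤ 2 * C * ζ := by nlinarith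
      have hζE : ζ ≤ δ / (2 * E) := min_le_right _ _
      have hkey : distortedSum d q y Q' K < 0 := by
        have t1 : (∑ i, ∑ j, if i = j then (0:ℝ)
            else |d (y i) (y j) ^ q - d (y i) (y j) ^ p|) * (1 + C ^ 2) ≤
            (δ / (2 * E)) * (1 + C ^ 2) :=
          mul_le_mul_of_nonneg_right hGq (by positivity)
        have t2 : (C ^ 2 - K ^ 2) * B ≤ 2 * C * (δ / (2 * E)) * B := by
          have h3 : 2 * C * ζ ≤ 2 * C * (δ / (2 * E)) :=
            mul_le_mul_of_nonneg_left hζE (by linarith)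
          exact mul_le_mul_of_nonneg_right (hCK.trans h3) hBnn
        have hE0 : E ≠ 0 := hEpos.ne'
        have hsum : (δ / (2 * E)) * (1 + C ^ 2) + 2 * C * (δ / (2 * E)) * B = δ / 2 := by
          calc (δ / (2 * E)) * (1 + C ^ 2) + 2 * C * (δ / (2 * E)) * B
              = δ * E / (2 * E) := by rw [hE_def]; ring
          _ = δ / 2 := mul_div_mul_right _ _ hE0
        have hdsQ' : distortedSum d p y Q' C ≤ -δ := by rw [hδ_def]; linarith
        linarith [hest, t1, t2, hsum, hdsQ']
      have htrans : distortedSum d q y Q K = posSum Q * distortedSum d q y Q' K := by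
        rw [hQ'_def, distortedSum_smul d q y Q K (inv_pos.mpr hs),
          ← mul_assoc, mul_inv_cancel₀ hs.ne', one_mul]
      rw [htrans]
      exact mul_neg_of_pos_of_neg hs hkey
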